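/- If A is generated as a K-algebra by the elements e(v) (v ∈ Q₀) together with x(α) (α ∈ Q₁), then A is finite-dimensional over K; more precisely, A is spanned as a K-vector space by the finite set consisting of the idempotents e(v) for v ∈ Q₀ together with the products x(α)·x(g(α))·x(g²(α))⋯x(g^r(α)) for α ∈ Q₁ and 0 ≤ r ≤ n_α − 1. -/

import Mathlib

/-!
Let `S` be the span of the idempotents and of the `g`-paths of length at most `n_α`. The Jacobian
relations together with the vanishing relations kill every `g`-path of length `n_α + 1`, so `S`
contains every `g`-path, and `1 = ∑ e v`. Right multiplication by a generator keeps `S` stable: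
a `g`-path followed by an arrow `β` is zero (the arrows do not compose, or `β = f γ` after at
least two arrows), a longer `g`-path (`β = g γ`), or, for a single arrow `α` followed by `f α`,
a scalar multiple of a `g`-path by the relation at `f² α`. A subspace containing `1` that is
stable under right multiplication by the generators contains the algebra they generate.
-/

open Function

/-- The product `x α * x (g α) * ⋯ * x (g^[m-1] α)` of `m` factors along the `g`-orbit,
read left to right (the empty product for `m = 0` is `1`). -/
def gpath {Q₁ A : Type} [Ring A] (x : Q₁ → A) (g : Q₁ → Q₁) (α : Q₁) (m : ℕ) : A :=
  ((List.range m).map fun i => x (g^[i] α)).prod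

theorem Submodule.span_eq_top_of_adjoin_eq_top {R A : Type*} [CommSemiring R] [Semiring A]
    [Algebra R A] {s G : Set A} (hs : Algebra.adjoin R s = ⊤) (h1 : 1 ∈ span R G)
    (hmul : ∀ a ∈ G, ∀ y ∈ s, a * y ∈ span R G) : span R G = ⊤ := by
  have hmul' : ∀ a ∈ span R G, ∀ y ∈ s, a * y ∈ span R G := fun a ha y hy =>
    (span_le (p := (span R G).comap (LinearMap.mulRight R y))).2 (fun b hb => hmul b hb y hy) ha
  have hclosure : (Submonoid.closure s : Set A) ⊆ span R G := fun a ha => by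
    induction ha using Submonoid.closure_induction_right with
    | one => exact h1
    | mul_right a _ y hy ih => exact hmul' a ih y hy
  rw [eq_top_iff, ← Algebra.toSubmodule_eq_top.2 hs, Algebra.adjoin_eq_span]
  exact span_le.2 hclosure

section Paths

variable {Q₁ A : Type} [Ring A] (x : Q₁ → A) (g : Q₁ → Q₁)

@[simp]
lemma gpath_zero (α : Q₁) : gpath x g α 0 = 1 := by simp [gpath]

lemma gpath_succ (α : Q₁) (m : ℕ) : gpath x g α (m + 1) = gpath x g α m * x (g^[m] α) := by
  simp [gpath, List.range_succ]

@[simp]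
lemma gpath_one (α : Q₁) : gpath x g α 1 = x α := by simp [gpath_succ]

lemma gpath_add (α : Q₁) (a b : ℕ) :
    gpath x g α (a + b) = gpath x g α a * gpath x g (g^[a] α) b := by
  induction b with
  | zero => simp
  | succ b ih => rw [← add_assoc, gpath_succ, ih, gpath_succ, mul_assoc, ← iterate_add_apply,
      add_comm b a]

def orbitPaths : Set A :=
  {a | ∃ (α : Q₁) (r : ℕ), r ≤ minimalPeriod g α - 1 ∧ a = gpath x g α (r + 1)}

lemma orbitPaths_finite [Finite Q₁] : (orbitPaths x g).Finite :=
  (Set.finite_iUnion fun α => (Set.finite_Iic (minimalPeriod g α - 1)).image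
    fun r => gpath x g α (r + 1)).subset
      fun _ ⟨α, r, hr, ha⟩ => Set.mem_iUnion.2 ⟨α, r, hr, ha.symm⟩

end Paths

section Jacobian

variable {Q₀ Q₁ A : Type} [Ring A] {s t : Q₁ → Q₀} {x : Q₁ → A} {e : Q₀ → A}

lemma idempotent_mul_eq_zero (horth : ∀ v w, v ≠ w → e v * e w = 0)
    (hes : ∀ α, e (s α) * x α = x α) {v : Q₀} {β : Q₁} (h : v ≠ s β) : e v * x β = 0 := by
  rw [← hes β, ← mul_assoc, horth _ _ h, zero_mul]

lemma mul_idempotent_eq_zero (horth : ∀ v w, v ≠ w → e v * e w = 0)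
    (het : ∀ α, x α * e (t α) = x α) {α : Q₁} {w : Q₀} (h : w ≠ t α) : x α * e w = 0 := by
  rw [← het α, mul_assoc, horth _ _ (Ne.symm h), mul_zero]

lemma eq_or_eq_of_source_eq_target [Fintype Q₁] [DecidableEq Q₀]
    (hout : ∀ v, (Finset.univ.filter fun e => s e = v).card = 2) {f g : Q₁ → Q₁}
    (hfg : ∀ α, f α ≠ g α) (hsf : ∀ α, s (f α) = t α) (hsg : ∀ α, s (g α) = t α)
    {α β : Q₁} (h : s β = t α) : β = f α ∨ β = g α := by
  classical
  have hsub : {f α, g α} ⊆ Finset.univ.filter fun e => s e = t α := by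
    simp [Finset.insert_subset_iff, hsf, hsg]
  have hcard : (Finset.univ.filter fun e => s e = t α).card ≤
      ({f α, g α} : Finset Q₁).card := by
    rw [hout, Finset.card_pair (hfg α)]
  have hβ : β ∈ Finset.univ.filter fun e => s e = t α := by simp [h]
  simpa [← Finset.eq_of_subset_of_card_le hsub hcard] using hβ

lemma arrow_mul_eq_zero_of_ne [Fintype Q₁] [DecidableEq Q₀]
    (hout : ∀ v, (Finset.univ.filter fun e => s e = v).card = 2) {f g : Q₁ → Q₁}
    (hfg : ∀ α, f α ≠ g α) (hsf : ∀ α, s (f α) = t α) (hsg : ∀ α, s (g α) = t α)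
    (horth : ∀ v w, v ≠ w → e v * e w = 0) (hes : ∀ α, e (s α) * x α = x α)
    (het : ∀ α, x α * e (t α) = x α) {α β : Q₁} (hf : β ≠ f α) (hg : β ≠ g α) :
    x α * x β = 0 := by
  have h : s β ≠ t α := fun h =>
    (eq_or_eq_of_source_eq_target hout hfg hsf hsg h).elim hf hg
  rw [← hes β, ← mul_assoc, mul_idempotent_eq_zero horth het h, zero_mul]

variable {K : Type} [Field K] [Algebra K A] {g : Q₁ → Q₁}

/-- The `g`-paths of length `n_α + 1` vanish: the last two arrows `γ, g γ = α` of such a path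
follow `f² γ` to zero, while `x (f γ) * x (f² γ)` is `c γ` times the first `n_α - 1` arrows. -/
lemma gpath_minimalPeriod_succ_eq_zero {f : Q₁ → Q₁} {c : Q₁ → K} (hc0 : ∀ α, c α ≠ 0)
    (hf3 : ∀ α, f (f (f α)) = α)
    (hrel : ∀ α, x (f α) * x (f (f α)) = c α • gpath x g (g α) (minimalPeriod g α - 1))
    (hvan : ∀ β, x β * x (f β) * x (g (f β)) = 0) {α : Q₁} (hα : α ∈ periodicPts g) :
    gpath x g α (minimalPeriod g α + 1) = 0 := by
  set n := minimalPeriod g α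
  set γ := g^[n - 1] α
  have hn : n - 1 + 1 = n := Nat.sub_add_cancel (minimalPeriod_pos_of_mem_periodicPts hα)
  have hgγ : g γ = α := by
    rw [← iterate_succ_apply' g (n - 1), Nat.succ_eq_add_one, hn, iterate_minimalPeriod]
  have hrelγ : x (f γ) * x (f (f γ)) = c γ • gpath x g α (n - 1) := by
    rw [hrel, minimalPeriod_apply_iterate hα, hgγ]
  have hsplit : gpath x g α (n + 1) = gpath x g α (n - 1) * (x γ * x α) := by
    conv_lhs => rw [← hn, gpath_succ, gpath_succ, iterate_succ_apply']
    rw [hgγ, mul_assoc]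
  have hvanγ : x (f (f γ)) * (x γ * x α) = 0 := by
    simpa [hf3, hgγ, mul_assoc] using hvan (f (f γ))
  have : c γ • gpath x g α (n + 1) = 0 := by
    rw [hsplit, ← smul_mul_assoc, ← hrelγ, mul_assoc, hvanγ, mul_zero]
  exact (smul_eq_zero.1 this).resolve_left (hc0 γ)

lemma gpath_mem_of_orbitPaths_subset {p : Submodule K A} (h1 : 1 ∈ p)
    (hT : orbitPaths x g ⊆ p) (hzero : ∀ α, gpath x g α (minimalPeriod g α + 1) = 0)
    (α : Q₁) (m : ℕ) : gpath x g α m ∈ p := by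
  rcases m with _ | r
  · simpa using h1
  by_cases hr : r ≤ minimalPeriod g α - 1
  · exact hT ⟨α, r, hr, rfl⟩
  · obtain ⟨k, hk⟩ := Nat.exists_eq_add_of_le (show minimalPeriod g α + 1 ≤ r + 1 by omega)
    rw [hk, gpath_add, hzero, zero_mul]
    exact p.zero_mem

lemma gpath_mul_mem {p : Submodule K A} (hpaths : ∀ α m, gpath x g α m ∈ p) {f : Q₁ → Q₁}
    {c : Q₁ → K} (hf3 : ∀ α, f (f (f α)) = α)
    (hrel : ∀ α, x (f α) * x (f (f α)) = c α • gpath x g (g α) (minimalPeriod g α - 1))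
    (hvan : ∀ β, x β * x (g β) * x (f (g β)) = 0)
    (hnext : ∀ α β, β ≠ f α → β ≠ g α → x α * x β = 0) (α : Q₁) (r : ℕ) (β : Q₁) :
    gpath x g α (r + 1) * x β ∈ p := by
  by_cases hf : β = f (g^[r] α)
  · subst hf
    rcases r with _ | k
    · have h := hrel (f (f α))
      simp only [hf3] at h
      simpa [h] using p.smul_mem _ (hpaths _ _)
    · rw [gpath_succ, gpath_succ, iterate_succ_apply', mul_assoc, mul_assoc,
        ← mul_assoc (x _), hvan, mul_zero]
      exact p.zero_mem
  by_cases hg : β = g (g^[r] α)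
  · rw [hg, ← iterate_succ_apply' g, ← gpath_succ]
    exact hpaths α (r + 2)
  · rw [gpath_succ, mul_assoc, hnext _ _ hf hg, mul_zero]
    exact p.zero_mem

lemma mul_mem_of_mem_generators {p : Submodule K A} (hidem : ∀ v, e v * e v = e v)
    (horth : ∀ v w, v ≠ w → e v * e w = 0) (hes : ∀ α, e (s α) * x α = x α)
    (het : ∀ α, x α * e (t α) = x α) (he : ∀ v, e v ∈ p)
    (hpaths : ∀ α m, gpath x g α m ∈ p) (harrow : ∀ α r β, gpath x g α (r + 1) * x β ∈ p) :
    ∀ a ∈ Set.range e ∪ orbitPaths x g, ∀ y ∈ Set.range e ∪ Set.range x, a * y ∈ p := by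
  rintro a (⟨v, rfl⟩ | ⟨α, r, -, rfl⟩) y (⟨w, rfl⟩ | ⟨β, rfl⟩)
  · by_cases hvw : v = w
    · rw [← hvw, hidem]
      exact he v
    · rw [horth _ _ hvw]
      exact p.zero_mem
  · by_cases hv : v = s β
    · rw [hv, hes, ← gpath_one x g]
      exact hpaths β 1
    · rw [idempotent_mul_eq_zero horth hes hv]
      exact p.zero_mem
  · rw [gpath_succ, mul_assoc]
    by_cases hw : w = t (g^[r] α)
    · rw [hw, het, ← gpath_succ]
      exact hpaths α (r + 1)
    · rw [mul_idempotent_eq_zero horth het hw, mul_zero]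
      exact p.zero_mem
  · exact harrow α r β

end Jacobian

theorem stmt_18_general
  {Q₀ Q₁ : Type} [Fintype Q₀] [Fintype Q₁] [DecidableEq Q₀]
  (s t : Q₁ → Q₀)
  (hout : ∀ v : Q₀, (Finset.univ.filter fun e => s e = v).card = 2)
  (f g : Q₁ ≃ Q₁)
  (hfg : ∀ α : Q₁, f α ≠ g α)
  (hsf : ∀ α : Q₁, s (f α) = t α)
  (hsg : ∀ α : Q₁, s (g α) = t α)
  (hf3 : ∀ α : Q₁, f (f (f α)) = α)
  {K : Type} [Field K] {A : Type} [Ring A] [Algebra K A]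
  (c : Q₁ → K) (hc0 : ∀ α : Q₁, c α ≠ 0)
  (x : Q₁ → A)
  (hrel : ∀ α : Q₁, x (f α) * x (f (f α)) =
      c α • gpath x (⇑g) (g α) (Function.minimalPeriod (⇑g) α - 1))
  (e : Q₀ → A)
  (hidem : ∀ v : Q₀, e v * e v = e v)
  (horth : ∀ v w : Q₀, v ≠ w → e v * e w = 0)
  (hsum : ∑ v : Q₀, e v = 1)
  (hes : ∀ α : Q₁, e (s α) * x α = x α)
  (het : ∀ α : Q₁, x α * e (t α) = x α)
  (hvan : ∀ β : Q₁, x β * x (g β) * x (f (g β)) = 0 ∧ x β * x (f β) * x (g (f β)) = 0)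
  (hgen : Algebra.adjoin K (Set.range e ∪ Set.range x) = ⊤) :
    FiniteDimensional K A ∧
      Submodule.span K (Set.range e ∪
        {a : A | ∃ (α : Q₁) (r : ℕ), r ≤ Function.minimalPeriod (⇑g) α - 1 ∧
          a = gpath x (⇑g) α (r + 1)}) = ⊤ := by
  change FiniteDimensional K A ∧ Submodule.span K (Set.range e ∪ orbitPaths x g) = ⊤
  set S := Submodule.span K (Set.range e ∪ orbitPaths x g)
  have he : ∀ v, e v ∈ S := fun v => Submodule.subset_span (Or.inl ⟨v, rfl⟩)
  have h1 : (1 : A) ∈ S := hsum ▸ Submodule.sum_mem _ fun v _ => he v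
  have hzero : ∀ α, gpath x g α (minimalPeriod g α + 1) = 0 := fun α =>
    gpath_minimalPeriod_succ_eq_zero hc0 hf3 hrel (fun β => (hvan β).2)
      (g.injective.mem_periodicPts α)
  have hpaths : ∀ α m, gpath x g α m ∈ S :=
    gpath_mem_of_orbitPaths_subset h1 (fun a ha => Submodule.subset_span (Or.inr ha)) hzero
  have harrow : ∀ α r β, gpath x g α (r + 1) * x β ∈ S :=
    gpath_mul_mem hpaths hf3 hrel (fun β => (hvan β).1) fun _ _ =>
      arrow_mul_eq_zero_of_ne hout hfg hsf hsg horth hes het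
  have hspan : S = ⊤ := Submodule.span_eq_top_of_adjoin_eq_top hgen h1
    (mul_mem_of_mem_generators hidem horth hes het he hpaths harrow)
  have hfin : (Set.range e ∪ orbitPaths x g).Finite :=
    (Set.finite_range e).union (orbitPaths_finite x g)
  exact ⟨⟨Submodule.fg_def.2 ⟨_, hfin, hspan⟩⟩, hspan⟩

theorem stmt_18
  {Q₀ Q₁ : Type} [Fintype Q₀] [Fintype Q₁] [DecidableEq Q₀] [DecidableEq Q₁]
  [Nonempty Q₀] [Nonempty Q₁]
  (s t : Q₁ → Q₀)
  (hconn : ∀ u v : Q₀, Relation.EqvGen (fun a b => ∃ e : Q₁, s e = a ∧ t e = b) u v)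
  (hnoloop : ∀ e : Q₁, s e ≠ t e)
  (hno2cyc : ∀ e e' : Q₁, ¬ (s e = t e' ∧ t e = s e'))
  (hout : ∀ v : Q₀, (Finset.univ.filter fun e => s e = v).card = 2)
  (hin : ∀ v : Q₀, (Finset.univ.filter fun e => t e = v).card = 2)
  (f g : Q₁ ≃ Q₁)
  (hfg : ∀ α : Q₁, f α ≠ g α)
  (hsf : ∀ α : Q₁, s (f α) = t α)
  (hsg : ∀ α : Q₁, s (g α) = t α)
  (hf3 : ∀ α : Q₁, f (f (f α)) = α)
  (bar : Q₁ → Q₁)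
  (hbar_ne : ∀ α : Q₁, bar α ≠ α)
  (hbar_s : ∀ α : Q₁, s (bar α) = s α)
  {K : Type} [Field K] {A : Type} [Ring A] [Algebra K A]
  (c : Q₁ → K) (hc0 : ∀ α : Q₁, c α ≠ 0) (hcg : ∀ α : Q₁, c (g α) = c α)
  (x : Q₁ → A)
  (hrel : ∀ α : Q₁, x (f α) * x (f (f α)) =
      c α • gpath x (⇑g) (g α) (Function.minimalPeriod (⇑g) α - 1))
  (e : Q₀ → A)
  (hidem : ∀ v : Q₀, e v * e v = e v)
  (horth : ∀ v w : Q₀, v ≠ w → e v * e w = 0)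
  (hsum : ∑ v : Q₀, e v = 1)
  (hes : ∀ α : Q₁, e (s α) * x α = x α)
  (het : ∀ α : Q₁, x α * e (t α) = x α)
  (hvan : ∀ β : Q₁, x β * x (g β) * x (f (g β)) = 0 ∧ x β * x (f β) * x (g (f β)) = 0)
  (hgen : Algebra.adjoin K (Set.range e ∪ Set.range x) = ⊤) :
    FiniteDimensional K A ∧
      Submodule.span K (Set.range e ∪
        {a : A | ∃ (α : Q₁) (r : ℕ), r ≤ Function.minimalPeriod (⇑g) α - 1 ∧
          a = gpath x (⇑g) α (r + 1)}) = ⊤ :=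
  stmt_18_general s t hout f g hfg hsf hsg hf3 c hc0 x hrel e hidem horth hsum hes het hvan hgen
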